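/- For every real t, |(ζ'/ζ)'(5 − it)| ≥ (log 2)²·2^{−5} − Σ_{n=3}^∞ Λ(n)·log(n)·n^{−5} ≥ 0.0075, where Λ is the von Mangoldt function; consequently |ζ(5−it)² / ν(5−it)| ≤ 1/0.0075 < 135. -/

import Mathlib

/-!
For `Re s > 1` the derivative of `ζ'/ζ = -∑ Λ(n) n^{-s}` is the Dirichlet series
`∑ Λ(n) log n · n^{-s}`, whose first nonzero term is `(log 2)² 2^{-s}`; the reverse triangle
inequality bounds `|(ζ'/ζ)'(s)|` below by that term minus the absolute values of the others.
On `Re s = 5` the terms `n = 3, …, 19` are estimated through `log p ≤ (b/a) log 2` whenever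
`p^a ≤ 2^b`, and the remaining tail through `Λ(n) log n ≤ (log n)² ≤ 4n` and the telescoping
bound `3/n⁴ ≤ 1/(n-1)³ - 1/n³`. Finally `ζ²/ν` is the reciprocal of `(ζ'/ζ)' = ν/ζ²`.
-/

open Complex

/-- `ν(s) = ζ(s)·ζ''(s) − ζ'(s)²`. -/
noncomputable def nu (s : ℂ) : ℂ :=
  riemannZeta s * iteratedDeriv 2 riemannZeta s - (deriv riemannZeta s) ^ 2

open ArithmeticFunction LSeries LSeries.notation Finset Filter Topology

noncomputable def vonMangoldtLogWeight (σ : ℝ) (n : ℕ) : ℝ :=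
  Λ n * Real.log n / (n : ℝ) ^ σ

lemma vonMangoldtLogWeight_nonneg (σ : ℝ) (n : ℕ) : 0 ≤ vonMangoldtLogWeight σ n :=
  div_nonneg (mul_nonneg vonMangoldt_nonneg (Real.log_natCast_nonneg n))
    (Real.rpow_nonneg n.cast_nonneg σ)

lemma vonMangoldtLogWeight_five (n : ℕ) :
    vonMangoldtLogWeight 5 n = Λ n * Real.log n / (n : ℝ) ^ 5 := by
  simp [vonMangoldtLogWeight]

lemma norm_sub_tsum_norm_le_norm_tsum {E : Type*} [NormedAddCommGroup E] [CompleteSpace E]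
    {f : ℕ → E} (hf : Summable (‖f ·‖)) {k : ℕ} (hk : ∀ n < k, f n = 0) :
    ‖f k‖ - ∑' n, ‖f (n + (k + 1))‖ ≤ ‖∑' n, f n‖ := by
  set T := ∑' n, f (n + (k + 1))
  have hsplit : ∑' n, f n = f k + T := by
    rw [← hf.of_norm.sum_add_tsum_nat_add (k + 1), sum_range_succ,
      sum_eq_zero fun n hn => hk n (mem_range.1 hn), zero_add]
  have htail : ‖T‖ ≤ ∑' n, ‖f (n + (k + 1))‖ :=
    norm_tsum_le_tsum_norm ((summable_nat_add_iff (k + 1)).2 hf)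
  have hfk : ‖f k‖ ≤ ‖∑' n, f n‖ + ‖T‖ := by
    rw [hsplit]
    exact (norm_sub_le _ _).trans_eq' (by rw [add_sub_cancel_right])
  linarith

lemma abscissaOfAbsConv_vonMangoldt_le_one : abscissaOfAbsConv ↗Λ ≤ 1 :=
  abscissaOfAbsConv_le_of_forall_lt_LSeriesSummable fun _ hy =>
    LSeriesSummable_vonMangoldt (by simpa using hy)

lemma deriv_logDeriv_riemannZeta_eq_LSeries {s : ℂ} (hs : 1 < s.re) :
    deriv (fun z => deriv riemannZeta z / riemannZeta z) s = LSeries (logMul ↗Λ) s := by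
  have hev : (fun z => deriv riemannZeta z / riemannZeta z) =ᶠ[𝓝 s] (-LSeries ↗Λ ·) := by
    filter_upwards [(isOpen_lt continuous_const continuous_re).mem_nhds hs] with z hz
    rw [LSeries_vonMangoldt_eq_deriv_riemannZeta_div hz, neg_div, neg_neg]
  rw [hev.deriv_eq, deriv.fun_neg, LSeries_deriv, neg_neg]
  exact abscissaOfAbsConv_vonMangoldt_le_one.trans_lt (by exact_mod_cast hs)

lemma norm_term_logMul_vonMangoldt (s : ℂ) (n : ℕ) :
    ‖term (logMul ↗Λ) s n‖ = vonMangoldtLogWeight s.re n := by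
  rw [norm_term_eq]
  rcases eq_or_ne n 0 with rfl | hn
  · simp [vonMangoldtLogWeight]
  · rw [if_neg hn, vonMangoldtLogWeight, logMul, norm_mul, ← natCast_log, norm_real, norm_real,
      Real.norm_of_nonneg (Real.log_natCast_nonneg n), Real.norm_of_nonneg vonMangoldt_nonneg,
      mul_comm]

lemma norm_deriv_logDeriv_riemannZeta_ge {s : ℂ} (hs : 1 < s.re) :
    vonMangoldtLogWeight s.re 2 - ∑' n, vonMangoldtLogWeight s.re (n + 3)
      ≤ ‖deriv (fun z => deriv riemannZeta z / riemannZeta z) s‖ := by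
  have hsum : Summable (‖term (logMul ↗Λ) s ·‖) :=
    (LSeriesSummable_logMul_of_lt_re <|
      abscissaOfAbsConv_vonMangoldt_le_one.trans_lt (by exact_mod_cast hs)).norm
  rw [deriv_logDeriv_riemannZeta_eq_LSeries hs, LSeries]
  convert norm_sub_tsum_norm_le_norm_tsum hsum (k := 2) ?_ using 2
  · exact (norm_term_logMul_vonMangoldt s 2).symm
  · exact tsum_congr fun n => (norm_term_logMul_vonMangoldt s (n + 3)).symm
  · intro n hn
    interval_cases n <;> simp [logMul]

lemma riemannZeta_sq_div_nu_eq_inv_deriv_logDeriv {s : ℂ} (hs : 1 < s.re) :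
    riemannZeta s ^ 2 / nu s = (deriv (fun z => deriv riemannZeta z / riemannZeta z) s)⁻¹ := by
  have hs1 : s ≠ 1 := fun h => by simp [h] at hs
  have hζ' : DifferentiableAt ℂ (deriv riemannZeta) s :=
    ((differentiableOn_riemannZeta.analyticOnNhd isOpen_compl_singleton).deriv s
      hs1).differentiableAt
  rw [deriv_fun_div hζ' (differentiableAt_riemannZeta hs1) (riemannZeta_ne_zero_of_one_lt_re hs),
    inv_div, nu, iteratedDeriv_succ, iteratedDeriv_one]
  ring

lemma log_le_mul_log_of_pow_le_pow {x y : ℝ} (hx : 0 < x) {a b : ℕ} (ha : 0 < a)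
    (h : x ^ a ≤ y ^ b) : Real.log x ≤ b / a * Real.log y := by
  have h' := Real.log_le_log (pow_pos hx a) h
  rw [Real.log_pow, Real.log_pow] at h'
  rw [div_mul_eq_mul_div, le_div_iff₀ (by exact_mod_cast ha)]
  linarith

lemma log_mul_log_le_of_pow_le_two_pow {x y : ℝ} (hx : 1 ≤ x) (hy : 1 ≤ y) {a b c d : ℕ}
    (ha : 0 < a) (hc : 0 < c) (hxab : x ^ a ≤ 2 ^ b) (hycd : y ^ c ≤ 2 ^ d) :
    Real.log x * Real.log y ≤ b / a * (d / c) * Real.log 2 ^ 2 := by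
  have hlx := log_le_mul_log_of_pow_le_pow (by linarith) ha hxab
  have hly := log_le_mul_log_of_pow_le_pow (by linarith) hc hycd
  calc Real.log x * Real.log y ≤ (b / a * Real.log 2) * (d / c * Real.log 2) :=
        mul_le_mul hlx hly (Real.log_nonneg hy) ((Real.log_nonneg hx).trans hlx)
    _ = b / a * (d / c) * Real.log 2 ^ 2 := by ring

lemma sq_log_le_four_mul {x : ℝ} (hx : 1 ≤ x) : Real.log x ^ 2 ≤ 4 * x := by
  have hsqrt : Real.log x ≤ 2 * √x := by
    have := Real.log_le_sub_one_of_pos (Real.sqrt_pos.2 (by linarith : 0 < x))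
    rw [Real.log_sqrt (by linarith)] at this
    linarith
  calc Real.log x ^ 2 ≤ (2 * √x) ^ 2 := pow_le_pow_left₀ (Real.log_nonneg hx) hsqrt 2
    _ = 4 * x := by rw [mul_pow, Real.sq_sqrt (by linarith)]; norm_num

lemma vonMangoldt_mul_log_le (n : ℕ) : Λ n * Real.log n ≤ 4 * n := by
  rcases n.eq_zero_or_pos with rfl | hn
  · simp
  calc Λ n * Real.log n ≤ Real.log n ^ 2 := by
        rw [sq]; exact mul_le_mul_of_nonneg_right vonMangoldt_le_log (Real.log_natCast_nonneg n)
    _ ≤ 4 * n := sq_log_le_four_mul (by exact_mod_cast hn)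

lemma vonMangoldtLogWeight_five_le (n : ℕ) :
    vonMangoldtLogWeight 5 n ≤ 4 / (n : ℝ) ^ 4 := by
  rw [vonMangoldtLogWeight_five]
  rcases eq_or_ne n 0 with rfl | hn
  · simp
  calc Λ n * Real.log n / (n : ℝ) ^ 5 ≤ 4 * n / (n : ℝ) ^ 5 :=
        div_le_div_of_nonneg_right (vonMangoldt_mul_log_le n) (by positivity)
    _ = 4 / (n : ℝ) ^ 4 := by field_simp

lemma tsum_le_of_le_sub_succ {f g : ℕ → ℝ} (hf : ∀ n, 0 ≤ f n) (hg : ∀ n, 0 ≤ g n)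
    (h : ∀ n, f n ≤ g n - g (n + 1)) : ∑' n, f n ≤ g 0 :=
  Real.tsum_le_of_sum_range_le hf fun N =>
    calc ∑ i ∈ range N, f i ≤ ∑ i ∈ range N, (g i - g (i + 1)) :=
          sum_le_sum fun i _ => h i
      _ = g 0 - g N := sum_range_sub' g N
      _ ≤ g 0 := sub_le_self _ (hg N)

lemma four_div_pow_four_le_sub {x : ℝ} (hx : 1 < x) :
    4 / x ^ 4 ≤ 4 / (3 * (x - 1) ^ 3) - 4 / (3 * x ^ 3) := by
  have hx1 : 0 < x - 1 := by linarith
  have key : 4 / (3 * (x - 1) ^ 3) - 4 / (3 * x ^ 3) - 4 / x ^ 4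
      = 4 * (6 * x ^ 2 - 8 * x + 3) / (3 * (x - 1) ^ 3 * x ^ 4) := by
    field_simp
    ring
  have : 0 ≤ 4 * (6 * x ^ 2 - 8 * x + 3) / (3 * (x - 1) ^ 3 * x ^ 4) :=
    div_nonneg (by nlinarith [sq_nonneg (3 * x - 2)]) (by positivity)
  linarith

lemma tsum_vonMangoldtLogWeight_five_nat_add_le {N : ℕ} (hN : 1 < N) :
    ∑' n, vonMangoldtLogWeight 5 (n + N) ≤ 4 / (3 * ((N : ℝ) - 1) ^ 3) := by
  have hN' : (1 : ℝ) < N := by exact_mod_cast hN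
  refine (tsum_le_of_le_sub_succ (g := fun n : ℕ => 4 / (3 * ((n : ℝ) + N - 1) ^ 3))
    (fun n => vonMangoldtLogWeight_nonneg 5 _) (fun n => ?_) fun n => ?_).trans_eq (by simp)
  all_goals have hx : (1 : ℝ) < n + N := by linarith [(n.cast_nonneg : (0 : ℝ) ≤ n)]
  · have : 0 ≤ (n : ℝ) + N - 1 := by linarith
    positivity
  · calc vonMangoldtLogWeight 5 (n + N) ≤ 4 / ((n : ℝ) + N) ^ 4 := by
          simpa using vonMangoldtLogWeight_five_le (n + N)
      _ ≤ _ := four_div_pow_four_le_sub hx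
      _ = _ := by push_cast; ring_nf

lemma sum_range_vonMangoldtLogWeight_five_le :
    ∑ i ∈ range 17, vonMangoldtLogWeight 5 (i + 3) ≤ 0.0151 * Real.log 2 ^ 2 := by
  -- `decide` alone cannot unfold `Nat.minFac`, which is defined by well-founded recursion
  simp (disch := decide +kernel) only [vonMangoldtLogWeight_five, sum_range_succ, sum_range_zero,
    vonMangoldt_apply, if_pos, if_neg]
  norm_num
  have h3 := log_mul_log_le_of_pow_le_two_pow (x := 3) (y := 3) (a := 5) (b := 8)
    (c := 5) (d := 8) ?_ ?_ ?_ ?_ ?_ ?_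
  have h4 := log_mul_log_le_of_pow_le_two_pow (x := 2) (y := 4) (a := 1) (b := 1)
    (c := 1) (d := 2) ?_ ?_ ?_ ?_ ?_ ?_
  have h5 := log_mul_log_le_of_pow_le_two_pow (x := 5) (y := 5) (a := 3) (b := 7)
    (c := 3) (d := 7) ?_ ?_ ?_ ?_ ?_ ?_
  have h7 := log_mul_log_le_of_pow_le_two_pow (x := 7) (y := 7) (a := 7) (b := 20)
    (c := 7) (d := 20) ?_ ?_ ?_ ?_ ?_ ?_
  have h8 := log_mul_log_le_of_pow_le_two_pow (x := 2) (y := 8) (a := 1) (b := 1)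
    (c := 1) (d := 3) ?_ ?_ ?_ ?_ ?_ ?_
  have h9 := log_mul_log_le_of_pow_le_two_pow (x := 3) (y := 9) (a := 5) (b := 8)
    (c := 5) (d := 16) ?_ ?_ ?_ ?_ ?_ ?_
  have h11 := log_mul_log_le_of_pow_le_two_pow (x := 11) (y := 11) (a := 3) (b := 11)
    (c := 3) (d := 11) ?_ ?_ ?_ ?_ ?_ ?_
  have h13 := log_mul_log_le_of_pow_le_two_pow (x := 13) (y := 13) (a := 4) (b := 15)
    (c := 4) (d := 15) ?_ ?_ ?_ ?_ ?_ ?_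
  have h16 := log_mul_log_le_of_pow_le_two_pow (x := 2) (y := 16) (a := 1) (b := 1)
    (c := 1) (d := 4) ?_ ?_ ?_ ?_ ?_ ?_
  have h17 := log_mul_log_le_of_pow_le_two_pow (x := 17) (y := 17) (a := 4) (b := 17)
    (c := 4) (d := 17) ?_ ?_ ?_ ?_ ?_ ?_
  have h19 := log_mul_log_le_of_pow_le_two_pow (x := 19) (y := 19) (a := 2) (b := 9)
    (c := 2) (d := 9) ?_ ?_ ?_ ?_ ?_ ?_
  norm_num at h3 h4 h5 h7 h8 h9 h11 h13 h16 h17 h19 ⊢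
  · linarith [sq_nonneg (Real.log 2)]
  all_goals norm_num

lemma summable_vonMangoldtLogWeight_five : Summable (vonMangoldtLogWeight 5) := by
  have h : Summable fun n : ℕ => 4 / (n : ℝ) ^ 4 := by
    simpa [div_eq_mul_inv] using (Real.summable_nat_pow_inv.2 (by norm_num)).mul_left 4
  exact h.of_nonneg_of_le (vonMangoldtLogWeight_nonneg 5) vonMangoldtLogWeight_five_le

lemma vonMangoldtLogWeight_five_two : vonMangoldtLogWeight 5 2 = Real.log 2 ^ 2 / 32 := by
  rw [vonMangoldtLogWeight_five, vonMangoldt_apply_prime Nat.prime_two]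
  norm_num
  ring

lemma vonMangoldtLogWeight_five_two_sub_tsum_ge :
    0.0075 ≤ vonMangoldtLogWeight 5 2 - ∑' n, vonMangoldtLogWeight 5 (n + 3) := by
  rw [← ((summable_nat_add_iff 3).2 summable_vonMangoldtLogWeight_five).sum_add_tsum_nat_add 17]
  have htail : ∑' n, vonMangoldtLogWeight 5 (n + 17 + 3) ≤ 4 / (3 * 19 ^ 3) := by
    simpa [add_assoc] using
      (tsum_vonMangoldtLogWeight_five_nat_add_le (N := 20) (by norm_num)).trans_eq (by norm_num)
  have hlog2 : 0.6931471803 ^ 2 ≤ Real.log 2 ^ 2 :=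
    pow_le_pow_left₀ (by norm_num) Real.log_two_gt_d9.le 2
  linarith [sum_range_vonMangoldtLogWeight_five_le, vonMangoldtLogWeight_five_two]

/-- For every real `t`:
`|(ζ'/ζ)'(5 − it)| ≥ (log 2)²·2^{−5} − Σ_{n=3}^∞ Λ(n)·log(n)·n^{−5} ≥ 0.0075`, and consequently
`|ζ(5−it)²/ν(5−it)| ≤ 1/0.0075 < 135`. -/
theorem logDeriv_zeta_deriv_lower_bound (t : ℝ) :
    ‖deriv (fun z => deriv riemannZeta z / riemannZeta z) (5 - Complex.I * t)‖
        ≥ (Real.log 2) ^ 2 * (2 : ℝ) ^ (-5 : ℤ)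
          - ∑' n : ℕ, ArithmeticFunction.vonMangoldt (n + 3) * Real.log (n + 3)
              * ((n + 3 : ℕ) : ℝ) ^ (-5 : ℤ) ∧
      (Real.log 2) ^ 2 * (2 : ℝ) ^ (-5 : ℤ)
          - ∑' n : ℕ, ArithmeticFunction.vonMangoldt (n + 3) * Real.log (n + 3)
              * ((n + 3 : ℕ) : ℝ) ^ (-5 : ℤ) ≥ 0.0075 ∧
      ‖riemannZeta (5 - Complex.I * t) ^ 2 / nu (5 - Complex.I * t)‖
        ≤ 1 / 0.0075 ∧
      (1 / 0.0075 : ℝ) < 135 := by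
  have hre : (5 - I * t).re = 5 := by simp
  have hs : 1 < (5 - I * t).re := by rw [hre]; norm_num
  have hweights : (Real.log 2) ^ 2 * (2 : ℝ) ^ (-5 : ℤ)
      - ∑' n : ℕ, Λ (n + 3) * Real.log (n + 3) * ((n + 3 : ℕ) : ℝ) ^ (-5 : ℤ)
      = vonMangoldtLogWeight 5 2 - ∑' n, vonMangoldtLogWeight 5 (n + 3) := by
    congr 1
    · rw [vonMangoldtLogWeight_five_two]
      norm_num [div_eq_mul_inv]
    · exact tsum_congr fun n => by
        rw [vonMangoldtLogWeight_five, zpow_neg, zpow_ofNat, div_eq_mul_inv]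
        push_cast
        rfl
  have hA := norm_deriv_logDeriv_riemannZeta_ge hs
  have hB := vonMangoldtLogWeight_five_two_sub_tsum_ge
  rw [hre] at hA
  rw [hweights, riemannZeta_sq_div_nu_eq_inv_deriv_logDeriv hs, norm_inv, one_div]
  exact ⟨hA, hB, inv_anti₀ (by norm_num) (hB.trans hA), by norm_num⟩
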